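/- Let G = (V,E) be a finite simple graph and let P be a probability measure on a finite set Ω of locally injective functions g : V → ℝ. Define the curvature K(v) = E_P[i_g(v)] = Σ_{g ∈ Ω} P({g}) · (1 − χ(S_g^-(v))). Then Σ_{v ∈ V} K(v) = χ(G). -/
import Mathlib


open Finset
open scoped Classical

/-- The cliques of the graph `G` contained in the vertex set `A`
(nonempty sets of pairwise adjacent vertices). -/
noncomputable def cliquesOn {V : Type*} (G : SimpleGraph V) (A : Finset V) :
    Finset (Finset V) :=
  A.powerset.filter (fun s => s.Nonempty ∧ G.IsClique (s : Set V))

/-- Euler characteristic of the subgraph of `G` induced on `A`. -/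
noncomputable def eulerCharOn {V : Type*} (G : SimpleGraph V) (A : Finset V) : ℤ :=
  ∑ s ∈ cliquesOn G A, (-1) ^ (s.card - 1)

/-- Euler characteristic of a finite simple graph. -/
noncomputable def eulerChar {V : Type*} [Fintype V] (G : SimpleGraph V) : ℤ :=
  eulerCharOn G Finset.univ

/-- The vertex set of `S_g^-(v)`: the neighbours `w` of `v` with `g w < g v`. -/
noncomputable def sphereMinus {V : Type*} [Fintype V] (G : SimpleGraph V)
    (g : V → ℝ) (v : V) : Finset V :=
  Finset.univ.filter (fun w => G.Adj v w ∧ g w < g v)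

/-- A vertex of `x` at which `g` attains its maximum (junk value if `x = ∅`). -/
noncomputable def maxVert {V : Type*} [Nonempty V] (g : V → ℝ) (x : Finset V) : V :=
  if h : x.Nonempty then (Finset.exists_max_image x g h).choose else Classical.arbitrary V

lemma maxVert_mem {V : Type*} [Nonempty V] (g : V → ℝ) {x : Finset V} (h : x.Nonempty) :
    maxVert g x ∈ x := by
  rw [maxVert, dif_pos h]
  exact (Finset.exists_max_image x g h).choose_spec.1

lemma le_maxVert {V : Type*} [Nonempty V] (g : V → ℝ) {x : Finset V} (h : x.Nonempty)
    {a : V} (ha : a ∈ x) : g a ≤ g (maxVert g x) := by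
  rw [maxVert, dif_pos h]
  exact (Finset.exists_max_image x g h).choose_spec.2 a ha

lemma not_mem_sphereMinus {V : Type*} [Fintype V] (G : SimpleGraph V) (g : V → ℝ) (v : V) :
    v ∉ sphereMinus G g v := by
  simp [sphereMinus]

lemma mem_cliquesOn {V : Type*} {G : SimpleGraph V} {A : Finset V} {s : Finset V} :
    s ∈ cliquesOn G A ↔ s ⊆ A ∧ s.Nonempty ∧ G.IsClique (s : Set V) := by
  simp [cliquesOn]

/-- Poincaré–Hopf for a single locally injective function. -/
lemma poincare_hopf {V : Type*} [Fintype V] (G : SimpleGraph V) (g : V → ℝ)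
    (hg : ∀ v w : V, G.Adj v w → g v ≠ g w) :
    ∑ v : V, (1 - eulerCharOn G (sphereMinus G g v)) = eulerChar G := by
  rcases isEmpty_or_nonempty V with hV | hV
  · simp [eulerChar, eulerCharOn, cliquesOn, Finset.eq_empty_of_isEmpty (α := V) Finset.univ,
      Finset.filter_singleton]
  rw [eulerChar, eulerCharOn,
    ← Finset.sum_fiberwise_of_maps_to (g := maxVert g) (t := Finset.univ)
      (fun x _ => Finset.mem_univ _)]
  refine Finset.sum_congr rfl fun v _ => ?_
  -- fiber at v ↔ `insert ∅ (cliquesOn G (sphereMinus G g v))` via `insert v`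
  have hvs : v ∉ sphereMinus G g v := not_mem_sphereMinus G g v
  have key : ∑ x ∈ (cliquesOn G Finset.univ).filter (fun x => maxVert g x = v),
      ((-1 : ℤ)) ^ (x.card - 1)
      = ∑ t ∈ insert (∅ : Finset V) (cliquesOn G (sphereMinus G g v)), (-1 : ℤ) ^ t.card := by
    refine Finset.sum_nbij' (fun x => x.erase v) (fun t => insert v t) ?_ ?_ ?_ ?_ ?_
    · intro x hx
      rw [Finset.mem_filter, mem_cliquesOn] at hx
      obtain ⟨⟨-, hxne, hxcl⟩, hmax⟩ := hx
      have hvx : v ∈ x := hmax ▸ maxVert_mem g hxne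
      show x.erase v ∈ insert ∅ (cliquesOn G (sphereMinus G g v))
      rcases Finset.eq_empty_or_nonempty (x.erase v) with he | hne
      · rw [he]; exact Finset.mem_insert_self _ _
      · refine Finset.mem_insert_of_mem (mem_cliquesOn.2 ⟨?_, hne, ?_⟩)
        · intro w hw
          rw [Finset.mem_erase] at hw
          obtain ⟨hwv, hwx⟩ := hw
          have hadj : G.Adj v w := hxcl hvx hwx (Ne.symm hwv)
          have hle : g w ≤ g v := hmax ▸ le_maxVert g hxne hwx
          have : g w < g v := lt_of_le_of_ne hle (fun h => hg v w hadj h.symm)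
          simp [sphereMinus, hadj, this]
        · exact hxcl.subset (by simp [Finset.coe_erase, Set.diff_subset])
    · intro t ht
      rw [Finset.mem_insert] at ht
      have hsub : t ⊆ sphereMinus G g v := by
        rcases ht with rfl | ht
        · simp
        · exact (mem_cliquesOn.1 ht).1
      have hvt : v ∉ t := fun h => hvs (hsub h)
      have hlt : ∀ w ∈ t, g w < g v := by
        intro w hw
        have := hsub hw
        simp only [sphereMinus, Finset.mem_filter] at this
        exact this.2.2
      have hadjt : ∀ w ∈ t, G.Adj v w := by
        intro w hw
        have := hsub hw
        simp only [sphereMinus, Finset.mem_filter] at this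
        exact this.2.1
      rw [Finset.mem_filter, mem_cliquesOn]
      have hne : (insert v t).Nonempty := Finset.insert_nonempty _ _
      refine ⟨⟨Finset.subset_univ _, hne, ?_⟩, ?_⟩
      · have hclt : G.IsClique (t : Set V) := by
          rcases ht with rfl | ht
          · simp
          · exact (mem_cliquesOn.1 ht).2.2
        rw [Finset.coe_insert]
        exact hclt.insert (fun b hb _ => hadjt b hb)
      · -- maxVert of insert v t is v
        show maxVert g (insert v t) = v
        by_contra hne'
        have hmem := maxVert_mem g hne
        rw [Finset.mem_insert] at hmem
        rcases hmem with h | h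
        · exact hne' h
        · have h1 : g v ≤ g (maxVert g (insert v t)) :=
            le_maxVert g hne (Finset.mem_insert_self v t)
          exact absurd h1 (not_le.2 (hlt _ h))
    · intro x hx
      rw [Finset.mem_filter, mem_cliquesOn] at hx
      obtain ⟨⟨-, hxne, -⟩, hmax⟩ := hx
      exact Finset.insert_erase (hmax ▸ maxVert_mem g hxne)
    · intro t ht
      rw [Finset.mem_insert] at ht
      have hvt : v ∉ t := by
        rcases ht with rfl | ht
        · simp
        · exact fun h => hvs ((mem_cliquesOn.1 ht).1 h)
      exact Finset.erase_insert hvt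
    · intro x hx
      rw [Finset.mem_filter, mem_cliquesOn] at hx
      obtain ⟨⟨-, hxne, -⟩, hmax⟩ := hx
      have hvx : v ∈ x := hmax ▸ maxVert_mem g hxne
      rw [Finset.card_erase_of_mem hvx]
  rw [key, Finset.sum_insert (by
    intro h
    exact absurd (mem_cliquesOn.1 h).2.1 (by simp))]
  have : ∑ t ∈ cliquesOn G (sphereMinus G g v), (-1 : ℤ) ^ t.card
      = - ∑ t ∈ cliquesOn G (sphereMinus G g v), (-1 : ℤ) ^ (t.card - 1) := by
    rw [← Finset.sum_neg_distrib]
    refine Finset.sum_congr rfl fun t ht => ?_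
    have hne : t.Nonempty := (mem_cliquesOn.1 ht).2.1
    have hc : t.card - 1 + 1 = t.card := Nat.succ_pred_eq_of_pos (Finset.card_pos.2 hne)
    conv_lhs => rw [← hc]
    rw [pow_succ]
    ring
  rw [this, eulerCharOn]
  simp
  ring

/-- Gauss–Bonnet for index expectation curvature: if `P` is a probability
measure on a finite set `Ω` of locally injective functions on `G`, then the
curvature `K(v) = E_P[i_g(v)] = Σ_g P(g)·(1 − χ(S_g^-(v)))` satisfies
`Σ_v K(v) = χ(G)`. -/
theorem gauss_bonnet_index_expectation {V : Type*} [Fintype V]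
    (G : SimpleGraph V) (Ω : Finset (V → ℝ)) (P : (V → ℝ) → ℝ)
    (hP0 : ∀ g ∈ Ω, 0 ≤ P g) (hP1 : ∑ g ∈ Ω, P g = 1)
    (hloc : ∀ g ∈ Ω, ∀ v w : V, G.Adj v w → g v ≠ g w) :
    ∑ v : V, ∑ g ∈ Ω,
        P g * (1 - (eulerCharOn G (sphereMinus G g v) : ℝ)) =
      (eulerChar G : ℝ) := by
  rw [Finset.sum_comm]
  have : ∀ g ∈ Ω, ∑ v : V, P g * (1 - (eulerCharOn G (sphereMinus G g v) : ℝ))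
      = P g * (eulerChar G : ℝ) := by
    intro g hg
    rw [← Finset.mul_sum]
    congr 1
    have := poincare_hopf G g (hloc g hg)
    calc ∑ v : V, (1 - (eulerCharOn G (sphereMinus G g v) : ℝ))
        = ((∑ v : V, (1 - eulerCharOn G (sphereMinus G g v)) : ℤ) : ℝ) := by push_cast; rfl
      _ = (eulerChar G : ℝ) := by rw [this]
  rw [Finset.sum_congr rfl this, ← Finset.sum_mul, hP1, one_mul]
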